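/- Let δ > 0 and A > 0, and suppose that M₂(x, h) ≤ A h x log x for all x ≥ 2 and all h with 1 ≤ h ≤ x^{1/2 + δ}. Then there is a constant C, depending only on A and δ, such that p_{n+1} − p_n ≤ C √(p_n log p_n) for all n ≥ 1. -/

import Mathlib

/-!
If the gap `g = p_{n+1} - p_n` exceeds `h ≥ 0`, then `θ` is constant on `(p_n, p_{n+1} - h)`, so the
integrand of `M₂(p_{n+1}, h)` equals `h²` there and
`h² (g - h) ≤ M₂(p_{n+1}, h) ≤ A h p_{n+1} log p_{n+1} ≤ 4 A h p_n log p_n` by Bertrand's postulate.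
Taking `h = g/2` gives `g² ≤ 16 A p_n log p_n`; if `g/2` exceeds the admissible range,
`h = p_n^{1/2+δ}` gives `g ≤ 8 A p_n^{1/2-δ} log p_n`, which is again `≪ √(p_n log p_n)` because
`log x ≤ x^{2δ}/(2δ)`.
-/

open scoped Classical

/-- The n-th prime (0-indexed: `nthPrime 0 = 2`). -/
noncomputable def nthPrime (n : ℕ) : ℕ := Nat.nth Nat.Prime n

/-- The Chebyshev theta function θ(t) = Σ_{p ≤ t} log p. -/
noncomputable def chebTheta (t : ℝ) : ℝ :=
  ∑ p ∈ (Finset.range (⌊t⌋₊ + 1)).filter Nat.Prime, Real.log p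

/-- The second moment M₂(x, h) = ∫₁ˣ (θ(y+h) - θ(y) - h)² dy. -/
noncomputable def M2 (x h : ℝ) : ℝ :=
  ∫ y in (1:ℝ)..x, (chebTheta (y + h) - chebTheta y - h) ^ 2

open MeasureTheory Real

lemma two_le_nthPrime (n : ℕ) : 2 ≤ nthPrime n := (Nat.prime_nth_prime n).two_le

lemma nthPrime_lt_nthPrime_succ (n : ℕ) : nthPrime n < nthPrime (n + 1) :=
  Nat.nth_strictMono Nat.infinite_setOfPred_prime n.lt_succ_self

lemma nthPrime_succ_le_two_mul (n : ℕ) : nthPrime (n + 1) ≤ 2 * nthPrime n := by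
  obtain ⟨r, hr, hnr, hr2⟩ :=
    Nat.exists_prime_lt_and_le_two_mul (nthPrime n) (Nat.prime_nth_prime n).ne_zero
  exact (not_lt.1 fun hrq ↦ (Nat.le_nth_of_lt_nth_succ hrq hr).not_gt hnr).trans hr2

lemma chebTheta_nonneg (t : ℝ) : 0 ≤ chebTheta t :=
  Finset.sum_nonneg fun p hp ↦
    Real.log_nonneg (by exact_mod_cast (Finset.mem_filter.1 hp).2.one_lt.le)

lemma chebTheta_mono : Monotone chebTheta := fun s t hst ↦
  Finset.sum_le_sum_of_subset_of_nonneg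
    (Finset.filter_subset_filter _ (Finset.range_subset_range.2 (by gcongr)))
    fun p hp _ ↦ Real.log_nonneg (by exact_mod_cast (Finset.mem_filter.1 hp).2.one_lt.le)

lemma chebTheta_eq_of_forall_prime_le {y z : ℝ} (hy : 0 ≤ y) (hyz : y ≤ z)
    (hprime : ∀ r : ℕ, r.Prime → (r : ℝ) ≤ z → (r : ℝ) ≤ y) : chebTheta z = chebTheta y := by
  unfold chebTheta
  congr 1
  ext r
  simp only [Finset.mem_filter, Finset.mem_range, Nat.lt_succ_iff,
    Nat.le_floor_iff hy, Nat.le_floor_iff (hy.trans hyz)]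
  exact ⟨fun ⟨hr, hp⟩ ↦ ⟨hprime r hp hr, hp⟩, fun ⟨hr, hp⟩ ↦ ⟨hr.trans hyz, hp⟩⟩

lemma chebTheta_eq_of_mem_Ico_nthPrime {n : ℕ} {y z : ℝ} (hy : (nthPrime n : ℝ) ≤ y)
    (hyz : y ≤ z) (hz : z < nthPrime (n + 1)) : chebTheta z = chebTheta y :=
  chebTheta_eq_of_forall_prime_le ((Nat.cast_nonneg _).trans hy) hyz fun r hr hrz ↦
    le_trans (by exact_mod_cast Nat.le_nth_of_lt_nth_succ (by exact_mod_cast hrz.trans_lt hz) hr)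
      hy

lemma intervalIntegrable_sq_chebTheta_sub (h a b : ℝ) :
    IntervalIntegrable (fun y ↦ (chebTheta (y + h) - chebTheta y - h) ^ 2) volume a b := by
  have hmeas : Measurable chebTheta := chebTheta_mono.measurable
  set c := max a b + |h|
  refine IntegrableOn.intervalIntegrable (IntegrableOn.of_bound measure_Icc_lt_top
    (by fun_prop) ((2 * chebTheta c + |h|) ^ 2) ?_)
  refine ae_restrict_of_forall_mem measurableSet_Icc fun y hy ↦ ?_
  have hyc : y ≤ max a b :=
    (Set.mem_uIcc.1 hy).elim (·.2.trans (le_max_right _ _)) (·.2.trans (le_max_left _ _))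
  have hshift_le : chebTheta (y + h) ≤ chebTheta c := chebTheta_mono (by linarith [le_abs_self h])
  have hle : chebTheta y ≤ chebTheta c := chebTheta_mono (by linarith [abs_nonneg h])
  have hshift_nonneg := chebTheta_nonneg (y + h)
  have hnonneg := chebTheta_nonneg y
  rw [norm_pow, Real.norm_eq_abs]
  gcongr
  rw [abs_le]
  constructor <;> linarith [le_abs_self h, neg_abs_le h]

lemma M2_nonneg {x : ℝ} (hx : 1 ≤ x) (h : ℝ) : 0 ≤ M2 x h :=
  intervalIntegral.integral_nonneg hx fun _ _ ↦ sq_nonneg _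

lemma sq_mul_nthPrime_gap_sub_le_M2 (n : ℕ) {h : ℝ} (hh : 0 ≤ h) :
    h ^ 2 * ((nthPrime (n + 1) : ℝ) - nthPrime n - h) ≤ M2 (nthPrime (n + 1)) h := by
  have hp : (2 : ℝ) ≤ nthPrime n := by exact_mod_cast two_le_nthPrime n
  have hpq : (nthPrime n : ℝ) ≤ nthPrime (n + 1) := by
    exact_mod_cast (nthPrime_lt_nthPrime_succ n).le
  set p : ℝ := (nthPrime n : ℝ)
  set q : ℝ := (nthPrime (n + 1) : ℝ)
  rcases lt_or_ge (q - h) p with hgap | hgap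
  · exact (mul_nonpos_of_nonneg_of_nonpos (sq_nonneg h) (by linarith)).trans
      (M2_nonneg (by linarith) h)
  have hθ : ∀ y ∈ Set.Ioo p (q - h), chebTheta (y + h) = chebTheta y := fun y hy ↦
    chebTheta_eq_of_mem_Ico_nthPrime hy.1.le (by linarith) (by linarith [hy.2])
  calc h ^ 2 * (q - p - h)
      = ∫ y in p..q - h, (chebTheta (y + h) - chebTheta y - h) ^ 2 := by
        rw [intervalIntegral.integral_of_le hgap, integral_Ioc_eq_integral_Ioo,
          setIntegral_congr_fun measurableSet_Ioo (g := fun _ ↦ h ^ 2) fun y hy ↦ by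
            simp only [hθ y hy]; ring,
          setIntegral_const, Real.volume_real_Ioo_of_le hgap, smul_eq_mul]
        ring
    _ ≤ M2 q h := intervalIntegral.integral_mono_interval (by linarith) hgap (by linarith)
        (.of_forall fun _ ↦ sq_nonneg _) (intervalIntegrable_sq_chebTheta_sub h 1 q)

lemma mul_log_le_four_mul_mul_log {x y : ℝ} (hx : 2 ≤ x) (hy : 1 ≤ y) (hyx : y ≤ 2 * x) :
    y * log y ≤ 4 * (x * log x) := by
  have hlog2 : log 2 ≤ log x := log_le_log two_pos hx
  have hlogy : log y ≤ 2 * log x := by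
    have := log_le_log (by linarith) hyx
    rw [log_mul two_ne_zero (by linarith)] at this
    linarith
  calc y * log y ≤ 2 * x * (2 * log x) := by
        have := log_nonneg hy
        gcongr
    _ = 4 * (x * log x) := by ring

lemma mul_log_div_rpow_le {x δ : ℝ} (hx : 1 ≤ x) (hδ : 0 < δ) :
    x * log x / x ^ ((1 : ℝ) / 2 + δ) ≤ √(x * log x) / √(2 * δ) := by
  have hlog : log x * (2 * δ) ≤ x ^ (2 * δ) :=
    (le_div_iff₀ (by positivity)).1 (log_le_rpow_div (by linarith) (by linarith))
  have hx0 : 0 < x := by linarith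
  have hxlog : 0 ≤ x * log x := mul_nonneg hx0.le (log_nonneg hx)
  have hsq : (x ^ ((1 : ℝ) / 2 + δ)) ^ 2 = x * x ^ (2 * δ) := by
    rw [← rpow_natCast, ← rpow_mul hx0.le, ← rpow_one_add' hx0.le (by positivity)]
    ring_nf
  rw [← sqrt_div' _ (by positivity), le_sqrt (by positivity) (by positivity), div_pow, hsq,
    div_le_div_iff₀ (by positivity) (by positivity)]
  calc (x * log x) ^ 2 * (2 * δ) = x * (x * log x) * (log x * (2 * δ)) := by ring
    _ ≤ x * (x * log x) * x ^ (2 * δ) := by gcongr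
    _ = x * log x * (x * x ^ (2 * δ)) := by ring

lemma one_le_sqrt_mul_log {x : ℝ} (hx : 2 ≤ x) : 1 ≤ √(x * log x) := by
  have hlog : 1 / 2 < log x := by
    linarith [log_le_log two_pos hx, Real.log_two_gt_d9]
  rw [one_le_sqrt]
  nlinarith

lemma le_max_of_forall_mul_sub_le {g H B : ℝ} (hH : 1 ≤ H)
    (hB : ∀ t, 1 ≤ t → t ≤ H → t * (g - t) ≤ B) : g ≤ max 2 (max (2 * √B) (2 * B / H)) := by
  rcases lt_or_ge g 2 with hg | hg
  · exact hg.le.trans (le_max_left _ _)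
  refine le_max_of_le_right ?_
  rcases le_or_gt g (2 * H) with hgH | hgH
  · have := hB (g / 2) (by linarith) (by linarith)
    refine le_max_of_le_left ?_
    have : g / 2 ≤ √B := (Real.le_sqrt' (by linarith)).2 (by nlinarith)
    linarith
  · have := hB H hH le_rfl
    refine le_max_of_le_right ?_
    rw [le_div_iff₀ (by linarith)]
    nlinarith

lemma mul_nthPrime_gap_sub_le {A t : ℝ} (hA : 0 ≤ A) (n : ℕ) (ht : 1 ≤ t)
    (hM : M2 (nthPrime (n + 1)) t ≤ A * t * nthPrime (n + 1) * log (nthPrime (n + 1))) :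
    t * ((nthPrime (n + 1) : ℝ) - nthPrime n - t) ≤ 4 * A * (nthPrime n * log (nthPrime n)) := by
  have hp : (2 : ℝ) ≤ nthPrime n := by exact_mod_cast two_le_nthPrime n
  have hpq : (nthPrime n : ℝ) ≤ nthPrime (n + 1) := by
    exact_mod_cast (nthPrime_lt_nthPrime_succ n).le
  have hqp : (nthPrime (n + 1) : ℝ) ≤ 2 * nthPrime n := by
    exact_mod_cast nthPrime_succ_le_two_mul n
  set p : ℝ := (nthPrime n : ℝ)
  set q : ℝ := (nthPrime (n + 1) : ℝ)
  have hqlog := mul_log_le_four_mul_mul_log hp (by linarith) hqp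
  refine le_of_mul_le_mul_left ?_ (by linarith : 0 < t)
  calc t * (t * (q - p - t)) = t ^ 2 * (q - p - t) := by ring
    _ ≤ A * t * q * log q := (sq_mul_nthPrime_gap_sub_le_M2 n (by linarith)).trans hM
    _ = t * (A * (q * log q)) := by ring
    _ ≤ t * (A * (4 * (p * log p))) := by gcongr
    _ = t * (4 * A * (p * log p)) := by ring

lemma max_le_mul_sqrt_mul_log {x A δ : ℝ} (hx : 2 ≤ x) (hA : 0 ≤ A) (hδ : 0 < δ) :
    max 2 (max (2 * √(4 * A * (x * log x))) (2 * (4 * A * (x * log x)) / x ^ ((1 : ℝ) / 2 + δ)))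
      ≤ (2 + 4 * √A + 8 * A / √(2 * δ)) * √(x * log x) := by
  have hs := one_le_sqrt_mul_log hx
  have hC : 0 ≤ 8 * A / √(2 * δ) := by positivity
  have hsqrt : √(4 * A * (x * log x)) = 2 * √A * √(x * log x) := by
    rw [sqrt_mul (by positivity), sqrt_mul (by norm_num), show (4 : ℝ) = 2 ^ 2 by norm_num,
      sqrt_sq zero_le_two]
  refine max_le ?_ (max_le ?_ ?_)
  · nlinarith [sqrt_nonneg A]
  · nlinarith [sqrt_nonneg A]
  · calc 2 * (4 * A * (x * log x)) / x ^ ((1 : ℝ) / 2 + δ)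
        = 8 * A * (x * log x / x ^ ((1 : ℝ) / 2 + δ)) := by ring
      _ ≤ 8 * A * (√(x * log x) / √(2 * δ)) :=
        mul_le_mul_of_nonneg_left (mul_log_div_rpow_le (by linarith) hδ) (by linarith)
      _ = 8 * A / √(2 * δ) * √(x * log x) := by ring
      _ ≤ _ := by nlinarith [sqrt_nonneg A]

/-- If M₂(x, h) ≤ A h x log x for 1 ≤ h ≤ x^{1/2+δ}, then
p_{n+1} - p_n ≤ C √(p_n log p_n) for all n. -/
theorem gap_bound_from_second_moment (δ A : ℝ) (hδ : 0 < δ) (hA : 0 < A)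
    (hM : ∀ x h : ℝ, 2 ≤ x → 1 ≤ h → h ≤ x ^ ((1 : ℝ) / 2 + δ) →
      M2 x h ≤ A * h * x * Real.log x) :
    ∃ C : ℝ, ∀ n : ℕ,
      (nthPrime (n + 1) : ℝ) - nthPrime n ≤
        C * Real.sqrt ((nthPrime n : ℝ) * Real.log (nthPrime n)) := by
  refine ⟨2 + 4 * √A + 8 * A / √(2 * δ), fun n ↦ ?_⟩
  have hp : (2 : ℝ) ≤ nthPrime n := by exact_mod_cast two_le_nthPrime n
  have hpq : (nthPrime n : ℝ) ≤ nthPrime (n + 1) := by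
    exact_mod_cast (nthPrime_lt_nthPrime_succ n).le
  have hB (t : ℝ) (ht : 1 ≤ t) (htH : t ≤ (nthPrime n : ℝ) ^ ((1 : ℝ) / 2 + δ)) :=
    mul_nthPrime_gap_sub_le hA.le n ht
      (hM _ t (hp.trans hpq) ht (htH.trans (by gcongr)))
  exact (le_max_of_forall_mul_sub_le (one_le_rpow (by linarith) (by positivity)) hB).trans
    (max_le_mul_sqrt_mul_log hp hA.le hδ)
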